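/- Let b : ℝ^k → ℝ be a convex function such that ∇b(x) ∈ Γ for every point x in the set D of points where b is differentiable. Then for every x ∈ ℝ^k and every direction y ∈ ℝ^k there exists a subgradient g ∈ ∂b(x) ∩ Γ that is maximal in the direction y, i.e., g·y = b′(x;y); in particular ∂b(x) ∩ Γ ≠ ∅ for every x ∈ ℝ^k. -/

import Mathlib

open MeasureTheory Filter

noncomputable section

abbrev E (k : ℕ) := EuclideanSpace ℝ (Fin k)

def orthant (k : ℕ) : Set (E k) := {x | ∀ i, 0 ≤ x i}

/-- The dot product `g · x` on `ℝ^k`. -/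
def dotp {k : ℕ} (g x : E k) : ℝ := ∑ i, g i * x i

def IsAlloc {k : ℕ} (Γ : Set (E k)) (q : E k → E k) : Prop :=
  ∀ x ∈ orthant k, q x ∈ Γ

def IsIC {k : ℕ} (q : E k → E k) (s : E k → ℝ) : Prop :=
  ∀ x ∈ orthant k, ∀ y ∈ orthant k, dotp (q x) x - s x ≥ dotp (q y) x - s y

def IsIR {k : ℕ} (q : E k → E k) (s : E k → ℝ) : Prop :=
  ∀ x ∈ orthant k, 0 ≤ dotp (q x) x - s x

def IsNPT {k : ℕ} (s : E k → ℝ) : Prop :=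
  ∀ x ∈ orthant k, 0 ≤ s x

/-- The set of subgradients of `f` at `x`. -/
def Subgrad {k : ℕ} (f : E k → ℝ) (x : E k) : Set (E k) :=
  {g | ∀ y, f y - f x ≥ dotp g (y - x)}

/-- `b ∈ B_Γ`: convex on `ℝ^k`, `b 0 = 0`, and a subgradient in `Γ` at every point. -/
def BClass {k : ℕ} (Γ : Set (E k)) (b : E k → ℝ) : Prop :=
  ConvexOn ℝ Set.univ b ∧ b 0 = 0 ∧ ∀ x, (Subgrad b x ∩ Γ).Nonempty

/-- One-sided directional derivative `f′(x;y) = lim_{δ→0⁺} (f(x+δy)-f(x))/δ`. -/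
def dirDeriv {k : ℕ} (b : E k → ℝ) (x y : E k) : ℝ :=
  limUnder (nhdsWithin (0:ℝ) (Set.Ioi 0)) fun δ => (b (x + δ • y) - b x) / δ

/-- The extended buyer payoff function `b(x) = sup_{z ∈ ℝ₊^k} [q(z)·x − s(z)]`. -/
def extPayoff {k : ℕ} (q : E k → E k) (s : E k → ℝ) (x : E k) : ℝ :=
  sSup ((fun z => dotp (q z) x - s z) '' orthant k)

def SellerFavorable {k : ℕ} (q : E k → E k) (s : E k → ℝ) : Prop :=
  ∀ x ∈ orthant k, s x = dirDeriv (extPayoff q s) x x - extPayoff q s x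

/-!
Near `x + δ • y` pick a point `z` of differentiability of `b` (Rademacher: these are dense) with
`|b z - b (x + δ • y)| < δ²`. Its gradient lies in `Γ` and is a subgradient at `z`; letting
`δ → 0⁺` along a subsequence on which these gradients converge (compactness of `Γ`), the limit
`G ∈ Γ` is a subgradient at `x` (the subgradient inequality passes to the limit), so
`G · y ≤ b′(x;y)`. Conversely, the subgradient inequality at `z`, tested against `x`, bounds the
difference quotient `(b (x + δ • y) - b x) / δ` by `∇b(z) · (z - x) / δ + δ`, whose limit is `G · y`.
-/

open Topology Set

theorem LocallyLipschitz.dense_differentiableAt {F G : Type*} [NormedAddCommGroup F]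
    [NormedSpace ℝ F] [FiniteDimensional ℝ F] [NormedAddCommGroup G] [NormedSpace ℝ G]
    [FiniteDimensional ℝ G] {f : F → G} (hf : LocallyLipschitz f) :
    Dense {x | DifferentiableAt ℝ f x} := by
  let _ : MeasurableSpace F := borel F
  have _ : BorelSpace F := ⟨rfl⟩
  refine dense_iff_inter_open.2 fun U hU ⟨p, hp⟩ => ?_
  obtain ⟨K, t, ht, hK⟩ := hf p
  have hV : (interior (t ∩ U)).Nonempty :=
    ⟨p, mem_interior_iff_mem_nhds.2 (inter_mem ht (hU.mem_nhds hp))⟩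
  have hae := (hK.mono (interior_subset.trans (inter_subset_left (t := U)))
    ).ae_differentiableWithinAt_of_mem (μ := (Module.finBasis ℝ F).addHaar)
  obtain ⟨z, hzV, hz⟩ := (Measure.dense_of_ae hae).inter_open_nonempty _
    isOpen_interior hV
  exact ⟨z, (interior_subset hzV).2, (hz hzV).differentiableAt (isOpen_interior.mem_nhds hzV)⟩

theorem Dense.exists_dist_lt_and_dist_lt {X Y : Type*} [PseudoMetricSpace X]
    [PseudoMetricSpace Y] {s : Set X} (hs : Dense s) {f : X → Y} {p : X} (hf : ContinuousAt f p)
    {ε : ℝ} (hε : 0 < ε) : ∃ z ∈ s, dist z p < ε ∧ dist (f z) (f p) < ε := by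
  have _ := mem_closure_iff_nhdsWithin_neBot.1 (hs p)
  have hev : ∀ᶠ z in 𝓝 p, dist z p < ε ∧ dist (f z) (f p) < ε :=
    Eventually.and (Metric.ball_mem_nhds p hε) (hf.eventually (Metric.ball_mem_nhds (f p) hε))
  exact (eventually_mem_nhdsWithin.and (nhdsWithin_le_nhds hev)).exists

theorem ConvexOn.comp_line {F : Type*} [AddCommGroup F] [Module ℝ F] {f : F → ℝ}
    (hf : ConvexOn ℝ univ f) (x y : F) : ConvexOn ℝ univ fun t : ℝ => f (x + t • y) := by
  have hline : (fun t : ℝ => f (x + t • y)) = f ∘ AffineMap.lineMap x (x + y) := by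
    funext t
    simp [AffineMap.lineMap_apply, add_comm]
  simpa [hline] using hf.comp_affineMap (AffineMap.lineMap x (x + y))

section Subgradients

variable {k : ℕ} {b : E k → ℝ}

theorem dotp_eq_inner (g x : E k) : dotp g x = inner ℝ g x := by
  simp [dotp, PiLp.inner_apply, RCLike.inner_apply, mul_comm]

theorem mem_subgrad_iff {g x : E k} : g ∈ Subgrad b x ↔ ∀ y, inner ℝ g (y - x) ≤ b y - b x := by
  simp [Subgrad, dotp_eq_inner]

theorem ConvexOn.gradient_mem_subgrad (hb : ConvexOn ℝ univ b) {z : E k}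
    (hd : DifferentiableAt ℝ b z) : gradient b z ∈ Subgrad b z := by
  refine mem_subgrad_iff.2 fun w => ?_
  have hline : HasDerivAt (fun t : ℝ => z + t • (w - z)) (w - z) 0 := by
    simpa using ((hasDerivAt_id (0 : ℝ)).smul_const (w - z)).const_add z
  have hderiv : HasDerivAt (fun t : ℝ => b (z + t • (w - z))) (inner ℝ (gradient b z) (w - z)) 0 :=
    (hasGradientAt_iff_hasFDerivAt.1 hd.hasGradientAt).comp_hasDerivAt_of_eq 0 hline (by simp)
  simpa [slope_def_field] using
    (hb.comp_line z (w - z)).le_slope_of_hasDerivAt (mem_univ 0) (mem_univ 1) one_pos hderiv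

theorem mem_subgrad_of_tendsto (hb : Continuous b) {ι : Type*} {l : Filter ι} [l.NeBot]
    {z g : ι → E k} {x G : E k} (hz : Tendsto z l (𝓝 x)) (hg : Tendsto g l (𝓝 G))
    (hsub : ∀ i, g i ∈ Subgrad b (z i)) : G ∈ Subgrad b x :=
  mem_subgrad_iff.2 fun w => le_of_tendsto_of_tendsto' (hg.inner (tendsto_const_nhds.sub hz))
    (tendsto_const_nhds.sub ((hb.tendsto x).comp hz)) fun i => mem_subgrad_iff.1 (hsub i) w

theorem ConvexOn.tendsto_dirDeriv (hb : ConvexOn ℝ univ b) (x y : E k) :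
    Tendsto (fun δ : ℝ => (b (x + δ • y) - b x) / δ) (𝓝[>] 0) (𝓝 (dirDeriv b x y)) := by
  have h := ((hb.comp_line x y).differentiableWithinAt_Ioi_of_mem_interior
    (x := 0) (by simp)).hasDerivWithinAt
  rw [hasDerivWithinAt_iff_tendsto_slope] at h
  obtain ⟨L, hL⟩ : ∃ L, Tendsto (fun δ : ℝ => (b (x + δ • y) - b x) / δ) (𝓝[>] 0) (𝓝 L) :=
    ⟨_, by simpa [slope_fun_def_field] using h⟩
  rwa [dirDeriv, hL.limUnder_eq]

theorem dotp_le_dirDeriv_of_mem_subgrad (hb : ConvexOn ℝ univ b) {g x : E k}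
    (hg : g ∈ Subgrad b x) (y : E k) : dotp g y ≤ dirDeriv b x y := by
  refine ge_of_tendsto (hb.tendsto_dirDeriv x y) ?_
  filter_upwards [self_mem_nhdsWithin] with δ (hδ : 0 < δ)
  have h := mem_subgrad_iff.1 hg (x + δ • y)
  rw [add_sub_cancel_left, real_inner_smul_right] at h
  rw [le_div_iff₀ hδ, dotp_eq_inner]
  linarith

theorem dirDeriv_le_of_tendsto (hb : ConvexOn ℝ univ b) {ι : Type*} {l : Filter ι}
    [l.NeBot] {δ : ι → ℝ} {w g : ι → E k} {x y G : E k} (hδ : Tendsto δ l (𝓝[>] 0))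
    (hw : Tendsto w l (𝓝 y)) (hg : Tendsto g l (𝓝 G))
    (hsub : ∀ i, g i ∈ Subgrad b (x + δ i • w i))
    (hb_near : ∀ i, b (x + δ i • y) - b (x + δ i • w i) ≤ δ i ^ 2) :
    dirDeriv b x y ≤ dotp G y := by
  have hlim : Tendsto (fun i => inner ℝ (g i) (w i) + δ i) l (𝓝 (dotp G y)) := by
    simpa [dotp_eq_inner] using (hg.inner hw).add (tendsto_nhds_of_tendsto_nhdsWithin hδ)
  refine le_of_tendsto_of_tendsto ((hb.tendsto_dirDeriv x y).comp hδ) hlim ?_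
  filter_upwards [hδ.eventually self_mem_nhdsWithin] with i (hi : 0 < δ i)
  have h := mem_subgrad_iff.1 (hsub i) x
  rw [sub_add_cancel_left, inner_neg_right, real_inner_smul_right] at h
  rw [Function.comp_apply, div_le_iff₀ hi]
  nlinarith [hb_near i]

theorem ConvexOn.exists_mem_subgrad_inter_dotp_eq_dirDeriv (hb : ConvexOn ℝ univ b)
    {Γ : Set (E k)} (hΓ : IsCompact Γ)
    (hgrad : ∀ x, DifferentiableAt ℝ b x → gradient b x ∈ Γ) (x y : E k) :
    ∃ g ∈ Subgrad b x ∩ Γ, dotp g y = dirDeriv b x y := by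
  have hcont : Continuous b := hb.locallyLipschitz.continuous
  set δ : ℕ → ℝ := fun n => 1 / (n + 1)
  have hδpos : ∀ n, 0 < δ n := fun n => Nat.one_div_pos_of_nat
  have hδ : Tendsto δ atTop (𝓝[>] 0) :=
    tendsto_nhdsWithin_iff.2 ⟨tendsto_one_div_add_atTop_nhds_zero_nat, .of_forall hδpos⟩
  choose z hzD hz hbz using fun n => hb.locallyLipschitz.dense_differentiableAt
    |>.exists_dist_lt_and_dist_lt (p := x + δ n • y) hcont.continuousAt (pow_pos (hδpos n) 2)
  set w : ℕ → E k := fun n => (δ n)⁻¹ • (z n - x)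
  have hzw : ∀ n, x + δ n • w n = z n := fun n => by
    simp [w, smul_inv_smul₀ (hδpos n).ne']
  have hw : Tendsto w atTop (𝓝 y) := by
    refine tendsto_iff_dist_tendsto_zero.2 (squeeze_zero (fun _ => dist_nonneg) (fun n => ?_)
      (tendsto_nhds_of_tendsto_nhdsWithin hδ))
    have hwy : w n - y = (δ n)⁻¹ • (z n - (x + δ n • y)) := by
      simp only [w, smul_sub, smul_add, inv_smul_smul₀ (hδpos n).ne']; abel
    rw [dist_eq_norm, hwy, norm_smul, norm_inv, Real.norm_of_nonneg (hδpos n).le,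
      ← dist_eq_norm, inv_mul_le_iff₀ (hδpos n), ← sq]
    exact (hz n).le
  have hsub : ∀ n, gradient b (z n) ∈ Subgrad b (x + δ n • w n) := fun n => by
    rw [hzw n]; exact hb.gradient_mem_subgrad (hzD n)
  have hb_near : ∀ n, b (x + δ n • y) - b (x + δ n • w n) ≤ δ n ^ 2 := fun n => by
    rw [hzw n]; exact (abs_sub_lt_iff.1 (hbz n)).2.le
  obtain ⟨G, hGΓ, φ, hφ, hG⟩ := hΓ.tendsto_subseq fun n => hgrad _ (hzD n)
  have hφ' := hφ.tendsto_atTop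
  have hzx : Tendsto (fun n => x + δ n • w n) atTop (𝓝 x) := by
    simpa using tendsto_const_nhds.add ((tendsto_nhds_of_tendsto_nhdsWithin hδ).smul hw)
  have hGsub : G ∈ Subgrad b x := mem_subgrad_of_tendsto hcont (hzx.comp hφ') hG fun m => hsub (φ m)
  exact ⟨G, ⟨hGsub, hGΓ⟩, (dotp_le_dirDeriv_of_mem_subgrad hb hGsub y).antisymm
    (dirDeriv_le_of_tendsto hb (hδ.comp hφ') (hw.comp hφ') hG (fun m => hsub (φ m))
      fun m => hb_near (φ m))⟩

end Subgradients

theorem stmt16_general {k : ℕ} (Γ : Set (E k))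
    (hΓc : IsCompact Γ)
    (b : E k → ℝ) (hconv : ConvexOn ℝ Set.univ b)
    (hgrad : ∀ x : E k, DifferentiableAt ℝ b x → gradient b x ∈ Γ) :
    (∀ x y : E k, ∃ g : E k, g ∈ Subgrad b x ∩ Γ ∧ dotp g y = dirDeriv b x y) ∧
    (∀ x : E k, (Subgrad b x ∩ Γ).Nonempty) := by
  have h := hconv.exists_mem_subgrad_inter_dotp_eq_dirDeriv hΓc hgrad
  exact ⟨h, fun x => (h x 0).elim fun g hg => ⟨g, hg.1⟩⟩

/-- if a convex `b : ℝ^k → ℝ` has gradient in `Γ` at every point of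
differentiability, then at every `x` and in every direction `y` there is a
subgradient `g ∈ ∂b(x) ∩ Γ` maximal in the direction `y`, i.e. `g·y = b′(x;y)`;
in particular `∂b(x) ∩ Γ ≠ ∅` everywhere. -/
theorem stmt16 {k : ℕ} (hk : 1 ≤ k) (Γ : Set (E k)) (hΓne : Γ.Nonempty)
    (hΓc : IsCompact Γ) (hΓ : Γ ⊆ orthant k)
    (b : E k → ℝ) (hconv : ConvexOn ℝ Set.univ b)
    (hgrad : ∀ x : E k, DifferentiableAt ℝ b x → gradient b x ∈ Γ) :
    (∀ x y : E k, ∃ g : E k, g ∈ Subgrad b x ∩ Γ ∧ dotp g y = dirDeriv b x y) ∧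
    (∀ x : E k, (Subgrad b x ∩ Γ).Nonempty) :=
  stmt16_general Γ hΓc b hconv hgrad
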